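/- arXiv:1102.2081 — 10 statements merged into one kernel-verified Lean document; each statement's English description precedes it below -/
import Mathlib

section
/- In an idempotent weakly abelian groupoid A, for any elements u, v₁, v₂, w, if u·v₁ = w and u·v₂ = w, then u·(v₁·v₂) = w. In particular, for fixed u, w ∈ A, the set {v ∈ A : u·v = w} is closed under multiplication. -/
/-- Terms (term operations) of a groupoid in `n` variables, built from
projections (variables) and the binary multiplication. -/
inductive GTerm (n : ℕ) : Type
  | var : Fin n → GTerm n
  | mul : GTerm n → GTerm n → GTerm n

/-- Evaluation of a term under the multiplication `m`. -/
def GTerm.eval {α : Type} (m : α → α → α) {n : ℕ} : GTerm n → (Fin n → α) → α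
  | .var i, v => v i
  | .mul s t, v => m (s.eval m v) (t.eval m v)

/-- `A` is weakly abelian: whenever a matrix ((u,u),(u,v)) of the form
((t(a,c), t(a,d)), (t(b,c), t(b,d))) arises from a term `t`, then u = v. -/
def WeaklyAbelian {α : Type} (m : α → α → α) : Prop :=
  ∀ (k l : ℕ) (t : GTerm (k + l)) (a b : Fin k → α) (c d : Fin l → α),
    t.eval m (Fin.append a c) = t.eval m (Fin.append b c) →
    t.eval m (Fin.append a c) = t.eval m (Fin.append a d) →
    t.eval m (Fin.append a c) = t.eval m (Fin.append b d)

/-- In an idempotent weakly abelian groupoid, u·v₁ = w and u·v₂ = w imply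
u·(v₁·v₂) = w; in particular {v | u·v = w} is closed under multiplication. -/
theorem stmt0 {α : Type} (m : α → α → α)
    (idem : ∀ x, m x x = x) (wa : WeaklyAbelian m) :
    (∀ u v₁ v₂ w : α, m u v₁ = w → m u v₂ = w → m u (m v₁ v₂) = w) ∧
    (∀ u w : α, ∀ v₁ ∈ {v : α | m u v = w}, ∀ v₂ ∈ {v : α | m u v = w},
      m v₁ v₂ ∈ {v : α | m u v = w}) := by
  have key : ∀ u v₁ v₂ w : α, m u v₁ = w → m u v₂ = w → m u (m v₁ v₂) = w := by
    intro u v₁ v₂ w h1 h2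
    have h := wa 2 1 (.mul (.var 0) (.mul (.var 1) (.var 2)))
      ![w, u] ![u, v₁] ![v₁] ![v₂] ?_ ?_
    · simp only [GTerm.eval, Fin.append, Fin.addCases] at h
      simp [Fin.castPred, Fin.castLT] at h
      rw [h1, idem] at h
      exact h.symm
    · simp only [GTerm.eval, Fin.append, Fin.addCases]
      simp [Fin.castPred, Fin.castLT]
      rw [h1, idem, idem, h1]
    · simp only [GTerm.eval, Fin.append, Fin.addCases]
      simp [Fin.castPred, Fin.castLT]
      rw [h1, h2]
  exact ⟨key, fun u w v₁ h1 v₂ h2 => key u v₁ v₂ w h1 h2⟩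
end

section
/- Every idempotent weakly abelian groupoid satisfies the identity (x·y)·(x·z) = (x·(y·z))·((x·y)·(x·z)). -/
/-- Every idempotent weakly abelian groupoid satisfies
(x·y)·(x·z) = (x·(y·z))·((x·y)·(x·z)). -/
theorem stmt1 {α : Type} (m : α → α → α)
    (idem : ∀ x, m x x = x) (wa : WeaklyAbelian m) :
    ∀ x y z : α, m (m x y) (m x z) = m (m x (m y z)) (m (m x y) (m x z)) := by
  intro x y z
  have key := wa 2 2
    (.mul (.mul (.var 2) (.mul (.var 3) (.var 0))) (.var 1))
    ![y, m x z] ![z, m (m x y) (m x z)] ![m x y, x] ![x, y]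
    (show m (m (m x y) (m x y)) (m x z)
        = m (m (m x y) (m x z)) (m (m x y) (m x z)) by rw [idem, idem])
    (show m (m (m x y) (m x y)) (m x z)
        = m (m x (m y y)) (m x z) by rw [idem, idem])
  rw [show ((GTerm.mul (.mul (.var 2) (.mul (.var 3) (.var 0))) (.var 1)).eval m
        (Fin.append ![y, m x z] ![m x y, x]))
      = m (m (m x y) (m x y)) (m x z) from rfl,
    show ((GTerm.mul (.mul (.var 2) (.mul (.var 3) (.var 0))) (.var 1)).eval m
        (Fin.append ![z, m (m x y) (m x z)] ![x, y]))
      = m (m x (m y z)) (m (m x y) (m x z)) from rfl,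
    idem (m x y)] at key
  exact key
end

section
/- Every idempotent weakly abelian groupoid satisfies the identity (y·x)·(z·x) = ((y·x)·(z·x))·((y·z)·x). -/
/-- Every idempotent weakly abelian groupoid satisfies
(y·x)·(z·x) = ((y·x)·(z·x))·((y·z)·x). -/
theorem stmt2 {α : Type} (m : α → α → α)
    (idem : ∀ x, m x x = x) (wa : WeaklyAbelian m) :
    ∀ x y z : α, m (m y x) (m z x) = m (m (m y x) (m z x)) (m (m y z) x) := by
  intro x y z
  have h := wa 2 2 (.mul (.var 0) (.mul (.mul (.var 1) (.var 2)) (.var 3)))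
    ![m y x, z] ![m (m y x) (m z x), y] ![x, m z x] ![z, x] ?h1 ?h2
  case h1 =>
    show m (m y x) (m (m z x) (m z x))
        = m (m (m y x) (m z x)) (m (m y x) (m z x))
    simp only [idem]
  case h2 =>
    show m (m y x) (m (m z x) (m z x)) = m (m y x) (m (m z z) x)
    simp only [idem]
  have h' : m (m y x) (m (m z x) (m z x))
      = m (m (m y x) (m z x)) (m (m y z) x) := h
  rwa [idem] at h'
end

section
/- Every idempotent weakly abelian groupoid satisfies the flexible identity (x·y)·x = x·(y·x). -/
/-- Appending two explicit 2-vectors gives an explicit 4-vector. -/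
lemma app22 {α : Type} (A B C D : α) :
    Fin.append ![A, B] ![C, D] = ![A, B, C, D] := by
  funext i; fin_cases i <;> rfl

/-- Every idempotent weakly abelian groupoid satisfies the flexible identity
(x·y)·x = x·(y·x). -/
theorem stmt3 {α : Type} (m : α → α → α)
    (idem : ∀ x, m x x = x) (wa : WeaklyAbelian m) :
    ∀ x y : α, m (m x y) x = m x (m y x) := by
  intro x y
  -- Weak abelianness applied to t(p₀,p₁,p₂,p₃) = p₀·((p₁·p₂)·p₃) gives
  -- x(yx) = (x(yx))·((xy)x).
  have h1 : m x (m y x) = m (m x (m y x)) (m (m x y) x) := by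
    have := wa 2 2
      (.mul (.var 0) (.mul (.mul (.var 1) (.var 2)) (.var 3)))
      ![x, y] ![m x (m y x), x] ![x, m y x] ![y, x] ?_ ?_
    · simpa [GTerm.eval, app22, idem] using this
    · simp [GTerm.eval, app22, idem]
    · simp [GTerm.eval, app22, idem]
  -- The mirror term t(p₀,p₁,p₂,p₃) = (p₃·(p₂·p₁))·p₀ gives
  -- (xy)x = (x(yx))·((xy)x).
  have h2 : m (m x y) x = m (m x (m y x)) (m (m x y) x) := by
    have := wa 2 2
      (.mul (.mul (.var 3) (.mul (.var 2) (.var 1))) (.var 0))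
      ![x, y] ![m (m x y) x, x] ![x, m x y] ![y, x] ?_ ?_
    · simpa [GTerm.eval, app22, idem] using this
    · simp [GTerm.eval, app22, idem]
    · simp [GTerm.eval, app22, idem]
  rw [h2, ← h1]
end

section
/- In an idempotent groupoid satisfying (x·y)·(x·z) = (x·(y·z))·((x·y)·(x·z)) and (y·x)·(z·x) = ((y·x)·(z·x))·((y·z)·x), the flexible law (x·y)·x = x·(y·x) holds. -/
/-- In an idempotent groupoid satisfying
(x·y)·(x·z) = (x·(y·z))·((x·y)·(x·z)) and
(y·x)·(z·x) = ((y·x)·(z·x))·((y·z)·x),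
the flexible law (x·y)·x = x·(y·x) holds. -/
theorem stmt4 {α : Type} (m : α → α → α)
    (idem : ∀ x, m x x = x)
    (h1 : ∀ x y z, m (m x y) (m x z) = m (m x (m y z)) (m (m x y) (m x z)))
    (h2 : ∀ x y z, m (m y x) (m z x) = m (m (m y x) (m z x)) (m (m y z) x)) :
    ∀ x y : α, m (m x y) x = m x (m y x) := by
  intro x y
  have a := h1 x y x
  have b := h2 x x y
  rw [idem] at a b
  exact a.trans b.symm
end

section
/- Every p-cyclic groupoid is weakly abelian. -/
/-- Left-associated power: `lpow m x y n = (⋯((x·y)·y)⋯)·y` with `n` copies of `y`. -/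
def lpow {α : Type} (m : α → α → α) (x y : α) : ℕ → α
  | 0 => x
  | n + 1 => m (lpow m x y n) y

/-- Head (leftmost variable) of a term. -/
def ghead {n : ℕ} : GTerm n → Fin n
  | .var i => i
  | .mul s _ => ghead s

/-- The list of heads of right factors of a term, in left-comb normal form. -/
def glist {n : ℕ} : GTerm n → List (Fin n)
  | .var _ => []
  | .mul s u => glist s ++ [ghead u]

theorem lpow_shift {α : Type} (m : α → α → α) (x y : α) :
    ∀ n, lpow m (m x y) y n = lpow m x y (n + 1)
  | 0 => rfl
  | n + 1 => by rw [lpow, lpow_shift m x y n]; rfl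

section Main

variable {α : Type} (m : α → α → α) (p : ℕ) (hp : p.Prime)
  (h1 : ∀ x y z, m x (m y z) = m x y)
  (h2 : ∀ x y z, m (m x y) z = m (m x z) y)
  (h3 : ∀ x y, lpow m x y p = x)

include h1 in
/-- Multiplying on the left against a term depends only on the head of the term. -/
theorem absorb {n : ℕ} (t : GTerm n) (v : Fin n → α) (x : α) :
    m x (t.eval m v) = m x (v (ghead t)) := by
  induction t with
  | var i => rfl
  | mul s u ihs ihu =>
      show m x (m _ _) = _
      rw [h1, ihs]; rfl

include h1 in
/-- Normal form: a term evaluates to a left-associated product of its head and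
the heads of its right factors. -/
theorem eval_eq {n : ℕ} (t : GTerm n) (v : Fin n → α) :
    t.eval m v = ((glist t).map v).foldl m (v (ghead t)) := by
  induction t with
  | var i => rfl
  | mul s u ihs ihu =>
      show m (s.eval m v) (u.eval m v) = _
      rw [absorb m h1 u v, ihs]
      simp [glist, ghead, List.foldl_append]

include h3 hp in
/-- Right multiplication is injective. -/
theorem rmul_inj (y : α) : Function.Injective fun x => m x y := by
  intro x x' h
  have hone : p - 1 + 1 = p := Nat.succ_pred_eq_of_pos hp.pos
  have key : ∀ z : α, lpow m (m z y) y (p - 1) = z := by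
    intro z
    rw [lpow_shift, hone, h3]
  calc x = lpow m (m x y) y (p - 1) := (key x).symm
    _ = lpow m (m x' y) y (p - 1) := by simp only at h; rw [h]
    _ = x' := key x'

include h3 hp in
theorem foldl_inj (ys : List α) : Function.Injective fun x => ys.foldl m x := by
  induction ys with
  | nil => intro x x' h; simpa using h
  | cons y ys ih =>
      intro x x' h
      simp only [List.foldl_cons] at h
      exact rmul_inj m p hp h3 y (ih h)

end Main

/-- Every p-cyclic groupoid is weakly abelian. -/
theorem stmt8 {α : Type} (m : α → α → α) (p : ℕ) (hp : p.Prime)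
    (idem : ∀ x, m x x = x)
    (h1 : ∀ x y z, m x (m y z) = m x y)
    (h2 : ∀ x y z, m (m x y) z = m (m x z) y)
    (h3 : ∀ x y, lpow m x y p = x) :
    WeaklyAbelian m := by
  intro k l t a b c d hbc had
  set i := ghead t with hi
  set L := glist t with hL
  -- split the list of indices into those from the first and second blocks
  set P : Fin (k + l) → Bool := fun j => decide ((j : ℕ) < k) with hP
  set LA := L.filter P with hLA
  set LB := L.filter (fun j => !P j) with hLB
  have hperm : List.Perm (LA ++ LB) L := List.filter_append_perm P L
  have hcomm : ∀ (zs : List α) (x y : Fin (k + l)) (v : Fin (k + l) → α),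
      True := fun _ _ _ _ => trivial
  -- evaluations with the A-block innermost and the B-block innermost
  have evalA : ∀ v : Fin (k + l) → α,
      t.eval m v = (LB.map v).foldl m ((LA.map v).foldl m (v i)) := by
    intro v
    rw [eval_eq m h1, ← hi, ← hL]
    rw [← ((hperm.map v).foldl_eq' (fun x _ y _ z => h2 z x y) (v i))]
    rw [List.map_append, List.foldl_append]
  have evalB : ∀ v : Fin (k + l) → α,
      t.eval m v = (LA.map v).foldl m ((LB.map v).foldl m (v i)) := by
    intro v
    rw [eval_eq m h1, ← hi, ← hL]
    have hperm' : List.Perm (LB ++ LA) L := (List.perm_append_comm).trans hperm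
    rw [← ((hperm'.map v).foldl_eq' (fun x _ y _ z => h2 z x y) (v i))]
    rw [List.map_append, List.foldl_append]
  -- values of append agree blockwise
  have happL : ∀ (a' : Fin k → α) (c' c'' : Fin l → α) (j : Fin (k + l)),
      (j : ℕ) < k → Fin.append a' c' j = Fin.append a' c'' j := by
    intro a' c' c'' j hj
    have hj' : j = Fin.castAdd l ⟨(j : ℕ), hj⟩ := by ext; rfl
    rw [hj', Fin.append_left, Fin.append_left]
  have happR : ∀ (a' a'' : Fin k → α) (c' : Fin l → α) (j : Fin (k + l)),
      ¬ (j : ℕ) < k → Fin.append a' c' j = Fin.append a'' c' j := by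
    intro a' a'' c' j hj
    have hjl : (j : ℕ) - k < l := by omega
    have hj' : j = Fin.natAdd k ⟨(j : ℕ) - k, hjl⟩ := by ext; simp; omega
    rw [hj', Fin.append_right, Fin.append_right]
  -- maps over LA depend only on the first block, maps over LB only on the second
  have mapA : ∀ (a' : Fin k → α) (c' c'' : Fin l → α),
      LA.map (Fin.append a' c') = LA.map (Fin.append a' c'') := by
    intro a' c' c''
    apply List.map_congr_left
    intro j hj
    have := List.of_mem_filter hj
    exact happL a' c' c'' j (by simpa [hP] using this)
  have mapB : ∀ (a' a'' : Fin k → α) (c' : Fin l → α),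
      LB.map (Fin.append a' c') = LB.map (Fin.append a'' c') := by
    intro a' a'' c'
    apply List.map_congr_left
    intro j hj
    have := List.of_mem_filter hj
    exact happR a' a'' c' j (by simpa [hP] using this)
  by_cases hik : (i : ℕ) < k
  · -- head variable lies in the first block: put the A-block fold innermost
    rw [evalA (Fin.append a c), evalA (Fin.append b d)]
    rw [evalA (Fin.append a c), evalA (Fin.append b c)] at hbc
    rw [evalA (Fin.append a c), evalA (Fin.append a d)] at had
    rw [mapB a b c] at hbc
    rw [← mapA a c d, ← happL a c d i hik] at had
    have hXX' := foldl_inj m p hp h3 (LB.map (Fin.append b c)) hbc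
    rw [mapB b a d, mapA b d c, happL b d c i hik, ← hXX']
    exact had
  · -- head variable lies in the second block: put the B-block fold innermost
    rw [evalB (Fin.append a c), evalB (Fin.append b d)]
    rw [evalB (Fin.append a c), evalB (Fin.append b c)] at hbc
    rw [evalB (Fin.append a c), evalB (Fin.append a d)] at had
    rw [← happR a b c i hik, ← mapB a b c] at hbc
    rw [← mapA a c d] at had
    have hYZ := foldl_inj m p hp h3 (LA.map (Fin.append a c)) had
    rw [happR b a d i hik, mapB b a d, mapA b d c, ← hYZ]
    exact hbc
end

section
/- For any prime p, the set ℤₚ × {0,1} with operation (a,b)∘(c,d) = (a+1,b) if b = 0 and d = 1, and (a,b)∘(c,d) = (a,b) otherwise, is a p-cyclic groupoid. -/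
/-- For any prime p, ℤₚ × {0,1} with (a,b)∘(c,d) = (a+1,b) if b = 0 and d = 1,
and (a,b)∘(c,d) = (a,b) otherwise, is a p-cyclic groupoid. -/
theorem stmt9 (p : ℕ) (hp : p.Prime)
    (m : ZMod p × Fin 2 → ZMod p × Fin 2 → ZMod p × Fin 2)
    (hm : ∀ x y, m x y = if x.2 = 0 ∧ y.2 = 1 then (x.1 + 1, x.2) else x) :
    (∀ x, m x x = x) ∧
    (∀ x y z, m x (m y z) = m x y) ∧
    (∀ x y z, m (m x y) z = m (m x z) y) ∧
    (∀ x y, lpow m x y p = x) := by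
  have hsnd : ∀ x y, (m x y).2 = x.2 := by
    intro x y; rw [hm]; split <;> rfl
  refine ⟨?_, ?_, ?_, ?_⟩
  · intro x
    rw [hm]
    split
    · omega
    · rfl
  · intro x y z
    rw [hm x (m y z), hm x y, hsnd]
  · intro x y z
    rw [hm x y, hm x z]
    by_cases hx : x.2 = 0
    · simp only [hx, true_and]
      by_cases hy : y.2 = 1 <;> by_cases hz : z.2 = 1 <;>
        simp [hm, hx, hy, hz] <;> ring_nf <;> simp [hx]
    · simp [hm, hx]
  · intro x y
    have key : ∀ n : ℕ, lpow m x y n =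
        (x.1 + (if x.2 = 0 ∧ y.2 = 1 then (n : ZMod p) else 0), x.2) := by
      intro n
      induction n with
      | zero => simp [lpow]
      | succ n ih =>
        rw [lpow, ih, hm]
        by_cases h : x.2 = 0 ∧ y.2 = 1 <;> simp [h] <;> push_cast <;> ring
    rw [key p]
    simp [ZMod.natCast_self]
end

section
/- In a right semilattice (idempotent groupoid with x·(y·z) = x·y, (x·y)·z = (x·z)·y, and (x·y)·y = x·y), if the groupoid is weakly abelian then x·y = x for all x, y (i.e., it is a left zero semigroup). -/
/-- A weakly abelian right semilattice is a left zero semigroup: x·y = x. -/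
theorem stmt11 {α : Type} (m : α → α → α)
    (idem : ∀ x, m x x = x)
    (h1 : ∀ x y z, m x (m y z) = m x y)
    (h2 : ∀ x y z, m (m x y) z = m (m x z) y)
    (h3 : ∀ x y, m (m x y) y = m x y)
    (wa : WeaklyAbelian m) :
    ∀ x y : α, m x y = x := by
  intro x y
  have app : ∀ p q r s : α, Fin.append ![p, q, r] ![s] = ![p, q, r, s] := by
    intro p q r s; funext i; fin_cases i <;> rfl
  have key := wa 3 1 (GTerm.mul (GTerm.mul (.var 1) (.var 3)) (GTerm.mul (.var 0) (.var 2)))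
    ![y, x, y] ![x, x, y] ![y] ![x] ?_ ?_
  · simp only [app, GTerm.eval] at key
    have key' : m (m x y) (m y y) = m (m x x) (m x y) := key
    rw [idem x, h1 x x y, idem x, h1 (m x y) y y, h3] at key'
    exact key'
  · simp only [app, GTerm.eval]
    show m (m x y) (m y y) = m (m x y) (m x y)
    rw [h1 (m x y) y y, h3, idem]
  · simp only [app, GTerm.eval]
    show m (m x y) (m y y) = m (m x x) (m y y)
    rw [idem x, h1 (m x y) y y, h3, h1 x y y]
end

section
/- Let A be an idempotent weakly abelian groupoid satisfying the left distributive law x·(y·z) = (x·y)·(x·z). Define a ∼ b iff a·b = a. Then for all a, b, c ∈ A: (i) a ∼ b implies (c·a) ∼ (c·b); (ii) a ∼ b implies (a·c)·(b·c) ∼ (a·c). -/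
/-- In an idempotent weakly abelian left distributive groupoid, with
a ∼ b iff a·b = a: if a ∼ b then (i) c·a ∼ c·b and (ii) (a·c)·(b·c) ∼ a·c. -/
theorem stmt15 {α : Type} (m : α → α → α)
    (idem : ∀ x, m x x = x) (wa : WeaklyAbelian m)
    (ld : ∀ x y z, m x (m y z) = m (m x y) (m x z)) :
    ∀ a b c : α, m a b = a →
      m (m c a) (m c b) = m c a ∧
      m (m (m a c) (m b c)) (m a c) = m (m a c) (m b c) := by
  intro a b c hab
  refine ⟨by rw [← ld, hab], ?_⟩
  -- use the term  t(v₁, v₂; w₁, w₂, w₃) = v₁ · ((v₂·w₁)·(w₂·w₃))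
  set t : GTerm (2 + 3) :=
    .mul (.var 0) (.mul (.mul (.var 1) (.var 2)) (.mul (.var 3) (.var 4))) with ht
  have h := wa 2 3 t ![m a c, b] ![m (m a c) (m b c), a] ![c, b, c] ![b, c, c]
  have e1 : t.eval m (Fin.append ![m a c, b] ![c, b, c])
      = m (m a c) (m b c) := by
    show m (m a c) (m (m b c) (m b c)) = _
    rw [idem]
  have e2 : t.eval m (Fin.append ![m (m a c) (m b c), a] ![c, b, c])
      = m (m a c) (m b c) := by
    show m (m (m a c) (m b c)) (m (m a c) (m b c)) = _
    rw [idem]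
  have e3 : t.eval m (Fin.append ![m a c, b] ![b, c, c])
      = m (m a c) (m b c) := by
    show m (m a c) (m (m b b) (m c c)) = _
    rw [idem, idem]
  have e4 : t.eval m (Fin.append ![m (m a c) (m b c), a] ![b, c, c])
      = m (m (m a c) (m b c)) (m a c) := by
    show m (m (m a c) (m b c)) (m (m a b) (m c c)) = _
    rw [hab, idem]
  have := h (by rw [e1, e2]) (by rw [e1, e3])
  rw [e1, e4] at this
  exact this.symm
end

section
/- An idempotent weakly abelian groupoid satisfying x·(x·y) = x in fact satisfies the stronger identity x·(y·z) = x·y. -/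
/-- An idempotent weakly abelian groupoid satisfying x·(x·y) = x satisfies
the stronger identity x·(y·z) = x·y. -/
theorem stmt17 {α : Type} (m : α → α → α)
    (idem : ∀ x, m x x = x) (wa : WeaklyAbelian m)
    (h : ∀ x y, m x (m x y) = x) :
    ∀ x y z : α, m x (m y z) = m x y := by
  intro x y z
  set s := m x (m y z) with hs
  have key := wa 2 1 (.mul (.var 0) (.mul (.var 1) (.var 2))) ![s, s] ![x, y] ![z] ![y] ?_ ?_
  · simp [GTerm.eval, Fin.append, Fin.addCases] at key
    exact (h s z).symm.trans (key.trans (congrArg (m x) (idem y)))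
  · exact (h s z).trans hs
  · exact (h s z).trans (h s y).symm
end
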